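/- For a graph G with an edge e ordered last, there is a short exact sequence of chain complexes 0 → C^{i−1,j}(G/e) →^α C^{i,j}(G) →^β C^{i,j}(G−e) → 0, where α is induced by adding the edge e to a state of G/e and β is the projection killing states containing e. -/

import Mathlib

/-- A finite multigraph (possibly with loops and multiple edges), with
vertex type `V` and edges indexed by `Fin n`, edge `e` having endpoints `ends e`. -/
structure OGraph where
  V : Type
  [finV : Fintype V]
  n : ℕ
  ends : Fin n → Sym2 V

attribute [instance] OGraph.finV

namespace OGraph

variable (G : OGraph)

/-- Two vertices are related if some edge in `s` joins them. -/
def rel (s : Finset (Fin G.n)) (u v : G.V) : Prop := ∃ e ∈ s, G.ends e = s(u, v)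

/-- The set of connected components of the spanning subgraph `[G:s]`. -/
def Comp (s : Finset (Fin G.n)) : Type := Quot (G.rel s)

/-- `k(s)`: the number of connected components of the spanning subgraph `[G:s]`. -/
noncomputable def ncomp (s : Finset (Fin G.n)) : ℕ := Nat.card (G.Comp s)

/-- The number of proper colorings of `G` with `m` colors: the value `P_G(m)` of
the chromatic polynomial at the natural number `m`. -/
noncomputable def chromatic (m : ℕ) : ℕ :=
  Nat.card {c : G.V → Fin m // ∀ e u v, G.ends e = s(u, v) → c u ≠ c v}

end OGraph

namespace OGraph

noncomputable instance finiteQuot {V : Type} [Finite V] (r : V → V → Prop) :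
    Fintype (Quot r) :=
  letI : Finite (Quot r) :=
    Finite.of_surjective (Quot.mk r) fun q => Quot.inductionOn q fun v => ⟨v, rfl⟩
  Fintype.ofFinite _

/-- The graph `G − e` obtained from `G` by deleting the edge `e`; the ordering of
the remaining edges is inherited from `G`. -/
def delG (V : Type) [Fintype V] {n : ℕ} (ends : Fin (n + 1) → Sym2 V)
    (e : Fin (n + 1)) : OGraph :=
  ⟨V, n, fun k => ends (e.succAbove k)⟩

/-- The graph `G / e` obtained from `G` by contracting the edge `e` (identifying its
two endpoints and removing `e`); the ordering of the remaining edges is inherited. -/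
noncomputable def ctrG (V : Type) [Fintype V] {n : ℕ} (ends : Fin (n + 1) → Sym2 V)
    (e : Fin (n + 1)) : OGraph :=
  ⟨Quot (fun u v : V => ends e = s(u, v)), n,
    fun k => (ends (e.succAbove k)).map (Quot.mk _)⟩

end OGraph

namespace OGraph

/-- The map on quotients induced by an implication of relations. -/
def qmap {V : Type} {r r' : V → V → Prop} (h : ∀ u v, r u v → r' u v) :
    Quot r → Quot r' :=
  Quot.lift (Quot.mk r') fun u v huv => Quot.sound (h u v huv)

variable (G : OGraph)

/-- An enhanced state: a subset `s` of the edges together with an assignment of a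
color (`1` or `x`; a component is "colored `x`" when the predicate holds) to each
connected component of the spanning subgraph `[G:s]`. -/
abbrev EState := Σ s : Finset (Fin G.n), (G.Comp s → Prop)

/-- `j(S)`: the number of components colored `x` in the enhanced state `S`. -/
noncomputable def jdeg (S : G.EState) : ℕ := Nat.card {k : G.Comp S.1 // S.2 k}

open Classical in
/-- The enhanced state(s) obtained from `S` by adding the edge `e`: zero if `e`
already belongs to `S` or if the added edge merges two components both colored `x`
(the product `x∗x = 0`); otherwise the enhanced state on `insert e s` whose
coloring is obtained from that of `S` using the product
`1∗1 = 1`, `1∗x = x∗1 = x`. -/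
noncomputable def addEdge (S : G.EState) (e : Fin G.n) : G.EState →₀ ℤ :=
  if e ∈ S.1 then 0
  else
    let p : G.Comp S.1 → G.Comp (insert e S.1) :=
      qmap fun _ _ huv => huv.elim fun f hf => ⟨f, Finset.mem_insert_of_mem hf.1, hf.2⟩
    if ∃ k1 k2 : G.Comp S.1, k1 ≠ k2 ∧ p k1 = p k2 ∧ S.2 k1 ∧ S.2 k2 then 0
    else Finsupp.single ⟨insert e S.1, fun K => ∃ k, p k = K ∧ S.2 k⟩ 1

/-- The differential applied to a single enhanced state: the signed sum, over all
edges `e` not in `S`, of the states obtained by adding `e`; the sign is `(-1)^{n(e)}`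
where `n(e)` is the number of edges of `S` ordered before `e`. -/
noncomputable def dState (S : G.EState) : G.EState →₀ ℤ :=
  ∑ e : Fin G.n, ((-1 : ℤ) ^ (S.1.filter fun f => f < e).card) • G.addEdge S e

/-- The differential of the graph cohomology complex, as a linear endomorphism of
the free `ℤ`-module generated by all enhanced states. -/
noncomputable def diff : (G.EState →₀ ℤ) →ₗ[ℤ] (G.EState →₀ ℤ) :=
  Finsupp.lsum ℤ fun S => LinearMap.toSpanSingleton ℤ _ (G.dState S)

/-- The chain group `C^{i,j}(G)`: the free `ℤ`-module spanned by the enhanced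
states with `i` edges and `j` components colored `x`, as a submodule of the free
module on all enhanced states. -/
noncomputable def Cmod (i j : ℕ) : Submodule ℤ (G.EState →₀ ℤ) :=
  Finsupp.supported ℤ ℤ {S : G.EState | S.1.card = i ∧ G.jdeg S = j}

/-- The cocycles of bidegree `(i,j)`. -/
noncomputable def Zmod (i j : ℕ) : Submodule ℤ (G.EState →₀ ℤ) :=
  LinearMap.ker G.diff ⊓ G.Cmod i j

/-- The coboundaries: `0` for `i = 0`, the image of `C^{i,j}` for `i + 1`. -/
noncomputable def Bmod : ℕ → ℕ → Submodule ℤ (G.EState →₀ ℤ)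
  | 0, _ => ⊥
  | i + 1, j => Submodule.map G.diff (G.Cmod i j)

/-- The graph cohomology group `H^{i,j}(G)` (cocycles modulo coboundaries in
bidegree `(i,j)`). -/
noncomputable def Hmod (i j : ℕ) : Type :=
  (G.Zmod i j).toAddSubgroup ⧸
    (AddSubgroup.comap (G.Zmod i j).toAddSubgroup.subtype (G.Bmod i j).toAddSubgroup)

noncomputable instance (i j : ℕ) : AddCommGroup (G.Hmod i j) := by
  delta Hmod; infer_instance

end OGraph

namespace OGraph

variable (V : Type) [Fintype V] {n : ℕ} (ends : Fin (n + 1) → Sym2 V)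

/-- The value of the projection map `β : C(G) → C(G−e)` (for `e` the last edge) on
a single enhanced state of `G`: states whose edge set contains `e` are sent to `0`,
and a state not containing `e` is sent to the corresponding state of `G − e`. -/
noncomputable def betaState (S : (OGraph.mk V (n + 1) ends).EState) :
    (delG V ends (Fin.last n)).EState →₀ ℤ :=
  if Fin.last n ∈ S.1 then 0
  else
    Finsupp.single
      ⟨S.1.preimage ((Fin.last n).succAbove) (Fin.succAbove_right_injective.injOn),
        fun K => S.2 (qmap (fun _ _ huv => huv.elim fun k hk =>
          ⟨(Fin.last n).succAbove k, Finset.mem_preimage.mp hk.1, hk.2⟩) K)⟩ 1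

/-- The projection chain map `β : C(G) → C(G−e)`. -/
noncomputable def betaMap :
    ((OGraph.mk V (n + 1) ends).EState →₀ ℤ) →ₗ[ℤ] ((delG V ends (Fin.last n)).EState →₀ ℤ) :=
  Finsupp.lsum ℤ fun S => LinearMap.toSpanSingleton ℤ _ (betaState V ends S)

/-- The map on components induced by contracting the last edge: a component of the
spanning subgraph `[G : s ∪ {e}]` determines a component of `[G/e : s]`. -/
noncomputable def thetaMap (s : Finset (Fin n)) :
    (OGraph.mk V (n + 1) ends).Comp (insert (Fin.last n) (s.image ((Fin.last n).succAbove))) →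
      (ctrG V ends (Fin.last n)).Comp s :=
  Quot.lift (fun v => Quot.mk _ (Quot.mk _ v))
    (fun u v huv => by
      obtain ⟨f, hf, he⟩ := huv
      rcases Finset.mem_insert.mp hf with h1 | h2
      · subst h1
        exact congrArg (Quot.mk _) (Quot.sound he)
      · obtain ⟨k, hk, hke⟩ := Finset.mem_image.mp h2
        subst hke
        exact Quot.sound ⟨k, hk, by
          show Sym2.map _ (ends ((Fin.last n).succAbove k)) = _
          rw [show ends ((Fin.last n).succAbove k) = s(u, v) from he]; rfl⟩)

/-- The value of the map `α : C(G/e) → C(G)` (for `e` the last edge) on a single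
enhanced state `(s, c)` of `G/e`: the enhanced state of `G` with edge set
`s ∪ {e}` and the coloring induced by `c` via contraction of `e`. -/
noncomputable def alphaState (S : (ctrG V ends (Fin.last n)).EState) :
    (OGraph.mk V (n + 1) ends).EState →₀ ℤ :=
  Finsupp.single
    ⟨insert (Fin.last n) (S.1.image ((Fin.last n).succAbove)),
      fun K => S.2 (thetaMap V ends S.1 K)⟩ 1

/-- The chain map `α : C(G/e) → C(G)` which adds the contracted edge `e`. -/
noncomputable def alphaMap :
    ((ctrG V ends (Fin.last n)).EState →₀ ℤ) →ₗ[ℤ] ((OGraph.mk V (n + 1) ends).EState →₀ ℤ) :=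
  Finsupp.lsum ℤ fun S => LinearMap.toSpanSingleton ℤ _ (alphaState V ends S)

end OGraph


namespace OGraph

section Aux

/-! ### Generic helper lemmas -/

theorem estate_ext {G : OGraph} {s t : Finset (Fin G.n)} (h : s = t)
    {c : G.Comp s → Prop} {d : G.Comp t → Prop}
    (hc : ∀ v : G.V, c (Quot.mk _ v) ↔ d (Quot.mk _ v)) :
    (⟨s, c⟩ : G.EState) = ⟨t, d⟩ := by
  subst h
  have : c = d := funext fun K => Quot.inductionOn K fun v => propext (hc v)
  rw [this]

theorem cast_quotmk {G : OGraph} {s t : Finset (Fin G.n)} (h : s = t) (v : G.V) :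
    cast (congrArg G.Comp h) (Quot.mk (G.rel s) v) = Quot.mk (G.rel t) v := by
  subst h; rfl

theorem merge_transfer {A B A' B' : Type} (p : A → B) (p' : A' → B')
    (θa : A → A') (θb : B → B') (ha : Function.Bijective θa) (hb : Function.Injective θb)
    (hcomm : ∀ x, θb (p x) = p' (θa x)) (c : A' → Prop) :
    (∃ k1 k2 : A, k1 ≠ k2 ∧ p k1 = p k2 ∧ c (θa k1) ∧ c (θa k2)) ↔
      (∃ k1 k2 : A', k1 ≠ k2 ∧ p' k1 = p' k2 ∧ c k1 ∧ c k2) := by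
  constructor
  · rintro ⟨k1, k2, hne, hpe, h1, h2⟩
    exact ⟨θa k1, θa k2, fun hh => hne (ha.1 hh), by rw [← hcomm, ← hcomm, hpe], h1, h2⟩
  · rintro ⟨k1, k2, hne, hpe, h1, h2⟩
    obtain ⟨j1, rfl⟩ := ha.2 k1
    obtain ⟨j2, rfl⟩ := ha.2 k2
    exact ⟨j1, j2, fun hh => hne (congrArg θa hh), hb (by rw [hcomm, hcomm, hpe]), h1, h2⟩

theorem color_transfer {A B A' B' : Type} (p : A → B) (p' : A' → B')
    (θa : A → A') (θb : B → B') (ha : Function.Bijective θa) (hb : Function.Injective θb)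
    (hcomm : ∀ x, θb (p x) = p' (θa x)) (c : A' → Prop) (K : B) :
    (∃ k, p k = K ∧ c (θa k)) ↔ (∃ k', p' k' = θb K ∧ c k') := by
  constructor
  · rintro ⟨k, rfl, hc⟩
    exact ⟨θa k, (hcomm k).symm, hc⟩
  · rintro ⟨k', hk', hc⟩
    obtain ⟨j, rfl⟩ := ha.2 k'
    exact ⟨j, hb (by rw [hcomm j, hk']), hc⟩

/-! ### The component maps -/

variable {V : Type} [Fintype V] {n : ℕ} (ends : Fin (n + 1) → Sym2 V)

/-- The map on components induced by an inclusion `s' → s` of edge sets (deleted graph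
to big graph). -/
@[reducible] def upC (s : Finset (Fin (n + 1))) (s' : Finset (Fin n))
    (h : ∀ k ∈ s', (Fin.last n).succAbove k ∈ s) :
    (delG V ends (Fin.last n)).Comp s' → (OGraph.mk V (n + 1) ends).Comp s :=
  qmap fun _ _ huv => huv.elim fun k hk => ⟨(Fin.last n).succAbove k, h k hk.1, hk.2⟩

@[reducible] def downC (s : Finset (Fin (n + 1))) (s' : Finset (Fin n))
    (h : ∀ f ∈ s, ∃ k ∈ s', (Fin.last n).succAbove k = f) :
    (OGraph.mk V (n + 1) ends).Comp s → (delG V ends (Fin.last n)).Comp s' :=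
  qmap fun u v huv => by
    obtain ⟨f, hf, hev⟩ := huv
    obtain ⟨k, hk, rfl⟩ := h f hf
    exact ⟨k, hk, hev⟩

theorem downC_upC (s : Finset (Fin (n + 1))) (s' : Finset (Fin n))
    (h1 : ∀ f ∈ s, ∃ k ∈ s', (Fin.last n).succAbove k = f)
    (h2 : ∀ k ∈ s', (Fin.last n).succAbove k ∈ s) (K) :
    downC ends s s' h1 (upC ends s s' h2 K) = K :=
  Quot.inductionOn K fun _ => rfl

theorem upC_downC (s : Finset (Fin (n + 1))) (s' : Finset (Fin n))
    (h1 : ∀ f ∈ s, ∃ k ∈ s', (Fin.last n).succAbove k = f)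
    (h2 : ∀ k ∈ s', (Fin.last n).succAbove k ∈ s) (K) :
    upC ends s s' h2 (downC ends s s' h1 K) = K :=
  Quot.inductionOn K fun _ => rfl

theorem upC_bij (s : Finset (Fin (n + 1))) (s' : Finset (Fin n))
    (h1 : ∀ f ∈ s, ∃ k ∈ s', (Fin.last n).succAbove k = f)
    (h2 : ∀ k ∈ s', (Fin.last n).succAbove k ∈ s) :
    Function.Bijective (upC ends s s' h2) :=
  ⟨Function.LeftInverse.injective (downC_upC ends s s' h1 h2),
   Function.RightInverse.surjective (g := downC ends s s' h1) (upC_downC ends s s' h1 h2)⟩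

theorem downC_bij (s : Finset (Fin (n + 1))) (s' : Finset (Fin n))
    (h1 : ∀ f ∈ s, ∃ k ∈ s', (Fin.last n).succAbove k = f)
    (h2 : ∀ k ∈ s', (Fin.last n).succAbove k ∈ s) :
    Function.Bijective (downC ends s s' h1) :=
  ⟨Function.LeftInverse.injective (upC_downC ends s s' h1 h2),
   Function.RightInverse.surjective (g := upC ends s s' h2) (downC_upC ends s s' h1 h2)⟩

/-- Theta-like map: components of the big graph with `e` present map to components of the
contracted graph. -/
@[reducible] def thC (s : Finset (Fin (n + 1))) (s' : Finset (Fin n))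
    (h : ∀ f ∈ s, f = Fin.last n ∨ ∃ k ∈ s', (Fin.last n).succAbove k = f) :
    (OGraph.mk V (n + 1) ends).Comp s → (ctrG V ends (Fin.last n)).Comp s' :=
  Quot.lift (fun v => Quot.mk _ (Quot.mk _ v)) (by
    intro u v huv
    obtain ⟨f, hf, hev⟩ := huv
    rcases h f hf with rfl | ⟨k, hk, rfl⟩
    · exact congrArg (Quot.mk _) (Quot.sound hev)
    · exact Quot.sound ⟨k, hk, by
        show Sym2.map _ (ends ((Fin.last n).succAbove k)) = _
        rw [show ends ((Fin.last n).succAbove k) = s(u, v) from hev]; rfl⟩)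

@[reducible] def psC0 (s : Finset (Fin (n + 1))) (hin : Fin.last n ∈ s) :
    Quot (fun u v : V => ends (Fin.last n) = s(u, v)) → (OGraph.mk V (n + 1) ends).Comp s :=
  Quot.lift (Quot.mk _) fun _ _ hv => Quot.sound ⟨Fin.last n, hin, hv⟩

@[reducible] def psC (s : Finset (Fin (n + 1))) (s' : Finset (Fin n)) (hin : Fin.last n ∈ s)
    (h : ∀ k ∈ s', (Fin.last n).succAbove k ∈ s) :
    (ctrG V ends (Fin.last n)).Comp s' → (OGraph.mk V (n + 1) ends).Comp s :=
  Quot.lift (psC0 ends s hin) (by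
    intro q q' hqq'
    obtain ⟨k, hk, hev⟩ := hqq'
    obtain ⟨a, b, hz⟩ : ∃ a b, ends ((Fin.last n).succAbove k) = s(a, b) := by
      generalize ends ((Fin.last n).succAbove k) = z
      induction z using Sym2.ind with
      | _ x y => exact ⟨x, y, rfl⟩
    have hab : Quot.mk ((OGraph.mk V (n + 1) ends).rel s) a = Quot.mk _ b :=
      Quot.sound ⟨(Fin.last n).succAbove k, h k hk, hz⟩
    have hev' : s(Quot.mk (fun u v : V => ends (Fin.last n) = s(u, v)) a, Quot.mk _ b)
        = s(q, q') := by
      have : (ctrG V ends (Fin.last n)).ends k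
          = (ends ((Fin.last n).succAbove k)).map (Quot.mk _) := rfl
      rw [this, hz, Sym2.map_pair_eq] at hev
      exact hev
    rcases Sym2.eq_iff.mp hev' with ⟨h1, h2⟩ | ⟨h1, h2⟩
    · rw [← h1, ← h2]; exact hab
    · rw [← h1, ← h2]; exact hab.symm)

theorem thC_psC (s : Finset (Fin (n + 1))) (s' : Finset (Fin n))
    (h : ∀ f ∈ s, f = Fin.last n ∨ ∃ k ∈ s', (Fin.last n).succAbove k = f)
    (hin : Fin.last n ∈ s) (h2 : ∀ k ∈ s', (Fin.last n).succAbove k ∈ s) (K) :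
    thC ends s s' h (psC ends s s' hin h2 K) = K :=
  Quot.inductionOn K fun q => Quot.inductionOn q fun _ => rfl

theorem psC_thC (s : Finset (Fin (n + 1))) (s' : Finset (Fin n))
    (h : ∀ f ∈ s, f = Fin.last n ∨ ∃ k ∈ s', (Fin.last n).succAbove k = f)
    (hin : Fin.last n ∈ s) (h2 : ∀ k ∈ s', (Fin.last n).succAbove k ∈ s) (K) :
    psC ends s s' hin h2 (thC ends s s' h K) = K :=
  Quot.inductionOn K fun _ => rfl

theorem thC_bij (s : Finset (Fin (n + 1))) (s' : Finset (Fin n))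
    (h : ∀ f ∈ s, f = Fin.last n ∨ ∃ k ∈ s', (Fin.last n).succAbove k = f)
    (hin : Fin.last n ∈ s) (h2 : ∀ k ∈ s', (Fin.last n).succAbove k ∈ s) :
    Function.Bijective (thC ends s s' h) :=
  ⟨Function.LeftInverse.injective (psC_thC ends s s' h hin h2),
   Function.RightInverse.surjective (g := psC ends s s' hin h2) (thC_psC ends s s' h hin h2)⟩

theorem hbig (s' : Finset (Fin n)) :
    ∀ f ∈ insert (Fin.last n) (s'.image ((Fin.last n).succAbove)),
      f = Fin.last n ∨ ∃ k ∈ s', (Fin.last n).succAbove k = f := by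
  intro f hf
  rcases Finset.mem_insert.mp hf with h | h
  · exact Or.inl h
  · obtain ⟨k, hk, hkf⟩ := Finset.mem_image.mp h
    exact Or.inr ⟨k, hk, hkf⟩

theorem hbig2 (s' : Finset (Fin n)) :
    ∀ k ∈ s', (Fin.last n).succAbove k ∈ insert (Fin.last n) (s'.image ((Fin.last n).succAbove)) :=
  fun k hk => Finset.mem_insert_of_mem (Finset.mem_image_of_mem _ hk)

theorem thetaMap_eq_thC (s' : Finset (Fin n)) :
    thetaMap V ends s' = thC ends _ s' (hbig s') := rfl

theorem theta_bij (s' : Finset (Fin n)) : Function.Bijective (thetaMap V ends s') := by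
  rw [thetaMap_eq_thC]
  exact thC_bij ends _ s' (hbig s') (Finset.mem_insert_self _ _) (hbig2 s')

/-! ### The state maps -/

/-- The state map underlying `alphaState`. -/
noncomputable def Fmap (S : (ctrG V ends (Fin.last n)).EState) : (OGraph.mk V (n + 1) ends).EState :=
  ⟨insert (Fin.last n) (S.1.image ((Fin.last n).succAbove)),
    fun K => S.2 (thetaMap V ends S.1 K)⟩

theorem alphaState_eq (S : (ctrG V ends (Fin.last n)).EState) :
    alphaState V ends S = Finsupp.single (Fmap ends S) 1 := rfl

/-- The state map underlying `betaState`. -/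
noncomputable def Bmap (S : (OGraph.mk V (n + 1) ends).EState) : (delG V ends (Fin.last n)).EState :=
  ⟨S.1.preimage ((Fin.last n).succAbove) (Fin.succAbove_right_injective.injOn),
    fun K => S.2 (qmap (fun _ _ huv => huv.elim fun k hk =>
      ⟨(Fin.last n).succAbove k, Finset.mem_preimage.mp hk.1, hk.2⟩) K)⟩

theorem betaState_eq (S : (OGraph.mk V (n + 1) ends).EState) :
    betaState V ends S =
      if Fin.last n ∈ S.1 then 0 else Finsupp.single (Bmap ends S) 1 := rfl

/-- A right inverse to `Bmap`. -/
noncomputable def Gmap (T : (delG V ends (Fin.last n)).EState) : (OGraph.mk V (n + 1) ends).EState :=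
  ⟨T.1.image ((Fin.last n).succAbove),
    fun K => T.2 (downC ends _ T.1
      (fun f hf => (Finset.mem_image.mp hf).elim fun k hk => ⟨k, hk.1, hk.2⟩) K)⟩

theorem mem_image_succAbove (s' : Finset (Fin n)) (f : Fin (n + 1)) (hf : f ≠ Fin.last n) :
    f ∈ s'.image ((Fin.last n).succAbove) ↔
      ∃ k ∈ s', (Fin.last n).succAbove k = f := Finset.mem_image

theorem image_preimage_succAbove (s : Finset (Fin (n + 1))) (he : Fin.last n ∉ s) :
    (s.preimage ((Fin.last n).succAbove) (Fin.succAbove_right_injective.injOn)).image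
      ((Fin.last n).succAbove) = s := by
  ext f
  simp only [Finset.mem_image, Finset.mem_preimage]
  constructor
  · rintro ⟨k, hk, rfl⟩; exact hk
  · intro hf
    have hne : f ≠ Fin.last n := fun h => he (h ▸ hf)
    obtain ⟨k, hk⟩ := Fin.exists_castSucc_eq.mpr hne
    refine ⟨k, ?_, ?_⟩ <;> rw [Fin.succAbove_last, hk] <;> try exact hf

theorem preimage_image_succAbove (s' : Finset (Fin n)) :
    (s'.image ((Fin.last n).succAbove)).preimage ((Fin.last n).succAbove)
      (Fin.succAbove_right_injective.injOn) = s' := by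
  ext k
  simp only [Finset.mem_preimage, Finset.mem_image]
  constructor
  · rintro ⟨j, hj, hjk⟩
    rwa [← Fin.succAbove_right_injective (p := Fin.last n) hjk]
  · intro hk; exact ⟨k, hk, rfl⟩

theorem last_not_mem_image (s' : Finset (Fin n)) :
    Fin.last n ∉ s'.image ((Fin.last n).succAbove) := by
  intro h
  obtain ⟨k, _, hk⟩ := Finset.mem_image.mp h
  exact Fin.succAbove_ne _ k hk

theorem Bmap_Gmap (T : (delG V ends (Fin.last n)).EState) : Bmap ends (Gmap ends T) = T := by
  obtain ⟨t, c⟩ := T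
  exact estate_ext (preimage_image_succAbove t) fun v => Iff.rfl

theorem Gmap_Bmap (S : (OGraph.mk V (n + 1) ends).EState) (he : Fin.last n ∉ S.1) :
    Gmap ends (Bmap ends S) = S := by
  obtain ⟨s, c⟩ := S
  exact estate_ext (image_preimage_succAbove s he) fun v => Iff.rfl

theorem Fmap_inj : Function.Injective (Fmap ends) := by
  rintro ⟨s, c⟩ ⟨t, d⟩ h
  have h1 : s = t := by
    have hfst : insert (Fin.last n) (Finset.image ((Fin.last n).succAbove) s)
        = insert (Fin.last n) (Finset.image ((Fin.last n).succAbove) t) :=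
      congrArg Sigma.fst h
    have h2 : (insert (Fin.last n) (Finset.image ((Fin.last n).succAbove) s)).erase (Fin.last n)
        = (insert (Fin.last n) (Finset.image ((Fin.last n).succAbove) t)).erase (Fin.last n) := by
      rw [hfst]
    rw [Finset.erase_insert (last_not_mem_image (n := n) s),
      Finset.erase_insert (last_not_mem_image (n := n) t)] at h2
    exact Finset.image_injective (Fin.succAbove_right_injective (p := Fin.last n)) h2
  subst h1
  have h2 := eq_of_heq (Sigma.mk.inj_iff.mp h).2
  have h3 : c = d := by
    funext K
    obtain ⟨K', rfl⟩ := (theta_bij ends s).2 K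
    exact congrFun h2 K'
  rw [h3]

/-! ### Basic values of the linear maps -/

theorem alphaMap_single (S : (ctrG V ends (Fin.last n)).EState) (a : ℤ) :
    alphaMap V ends (Finsupp.single S a) = Finsupp.single (Fmap ends S) a := by
  rw [alphaMap, Finsupp.lsum_single, LinearMap.toSpanSingleton_apply, alphaState_eq,
    Finsupp.smul_single, smul_eq_mul, mul_one]

theorem betaMap_single (S : (OGraph.mk V (n + 1) ends).EState) (a : ℤ) :
    betaMap V ends (Finsupp.single S a) = a • betaState V ends S := by
  rw [betaMap, Finsupp.lsum_single, LinearMap.toSpanSingleton_apply]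

theorem diff_single (G : OGraph) (S : G.EState) (a : ℤ) :
    G.diff (Finsupp.single S a) = a • G.dState S := by
  rw [OGraph.diff, Finsupp.lsum_single, LinearMap.toSpanSingleton_apply]

theorem alphaMap_eq_mapDomain (x : (ctrG V ends (Fin.last n)).EState →₀ ℤ) :
    alphaMap V ends x = Finsupp.mapDomain (Fmap ends) x := by
  induction x using Finsupp.induction with
  | zero => simp
  | single_add a b f _ _ ih =>
    rw [map_add, Finsupp.mapDomain_add, ih, alphaMap_single, Finsupp.mapDomain_single]

/-! ### addEdge computation lemmas -/

/-- The canonical map on components when an edge is added. -/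
@[reducible] def pmap (G : OGraph) (S : G.EState) (f : Fin G.n) :
    G.Comp S.1 → G.Comp (insert f S.1) :=
  qmap fun _ _ huv => huv.elim fun g hg => ⟨g, Finset.mem_insert_of_mem hg.1, hg.2⟩

theorem addEdge_of_mem (G : OGraph) (S : G.EState) (f : Fin G.n) (hf : f ∈ S.1) :
    G.addEdge S f = 0 := by
  unfold OGraph.addEdge
  rw [if_pos hf]

open Classical in
theorem addEdge_of_not_mem (G : OGraph) (S : G.EState) (f : Fin G.n) (hf : f ∉ S.1) :
    G.addEdge S f =
      if ∃ k1 k2 : G.Comp S.1, k1 ≠ k2 ∧ pmap G S f k1 = pmap G S f k2 ∧ S.2 k1 ∧ S.2 k2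
        then 0
      else Finsupp.single ⟨insert f S.1, fun K => ∃ k, pmap G S f k = K ∧ S.2 k⟩ 1 := by
  unfold OGraph.addEdge
  rw [if_neg hf]

/-! ### Sign lemmas -/

theorem filter_image_lt (s' : Finset (Fin n)) (k : Fin n) :
    ((s'.image ((Fin.last n).succAbove)).filter (fun f => f < (Fin.last n).succAbove k)).card
      = (s'.filter (fun j => j < k)).card := by
  rw [Fin.succAbove_last]
  rw [Finset.filter_image, Finset.card_image_of_injective _ (Fin.castSucc_injective n)]
  congr 1

theorem sign_alpha (s' : Finset (Fin n)) (k : Fin n) :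
    ((insert (Fin.last n) (s'.image ((Fin.last n).succAbove))).filter
      (fun f => f < (Fin.last n).succAbove k)).card = (s'.filter (fun j => j < k)).card := by
  have hnl : ¬ (Fin.last n < (Fin.last n).succAbove k) := by
    rw [Fin.succAbove_last]; exact not_lt.mpr (Fin.castSucc_lt_last k).le
  rw [Finset.filter_insert, if_neg hnl, filter_image_lt]

theorem sign_beta (s : Finset (Fin (n + 1))) (he : Fin.last n ∉ s) (k : Fin n) :
    (s.filter (fun f => f < (Fin.last n).succAbove k)).card
      = ((s.preimage ((Fin.last n).succAbove) (Fin.succAbove_right_injective.injOn)).filter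
          (fun j => j < k)).card := by
  conv_lhs => rw [← image_preimage_succAbove s he]
  rw [filter_image_lt]

theorem succAbove_mem_insert_iff (s' : Finset (Fin n)) (k : Fin n) :
    (Fin.last n).succAbove k ∈ insert (Fin.last n) (s'.image ((Fin.last n).succAbove)) ↔
      k ∈ s' := by
  constructor
  · intro h
    rcases Finset.mem_insert.mp h with h | h
    · exact absurd h (Fin.succAbove_ne _ k)
    · obtain ⟨j, hj, hjk⟩ := Finset.mem_image.mp h
      rwa [← Fin.succAbove_right_injective (p := Fin.last n) hjk]
  · exact fun h => Finset.mem_insert_of_mem (Finset.mem_image_of_mem _ h)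

/-! ### Commutation of `addEdge` with `alphaMap` and `betaMap` -/

theorem alpha_addEdge (S : (ctrG V ends (Fin.last n)).EState) (k : Fin n) :
    alphaMap V ends ((ctrG V ends (Fin.last n)).addEdge S k)
      = (OGraph.mk V (n + 1) ends).addEdge (Fmap ends S) ((Fin.last n).succAbove k) := by
  by_cases hk : k ∈ S.1
  · rw [addEdge_of_mem _ _ _ hk, map_zero,
      addEdge_of_mem _ _ _ ((succAbove_mem_insert_iff (n := n) S.1 k).mpr hk)]
  · rw [addEdge_of_not_mem _ _ _ hk,
      addEdge_of_not_mem _ _ _ (fun h => hk ((succAbove_mem_insert_iff (n := n) S.1 k).mp h))]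
    have hθbmem : ∀ f ∈ insert ((Fin.last n).succAbove k) (Fmap ends S).1,
        f = Fin.last n ∨ ∃ j ∈ insert k S.1, (Fin.last n).succAbove j = f := by
      intro f hf
      rcases Finset.mem_insert.mp hf with rfl | hf2
      · exact Or.inr ⟨k, Finset.mem_insert_self _ _, rfl⟩
      · rcases Finset.mem_insert.mp hf2 with rfl | h3
        · exact Or.inl rfl
        · obtain ⟨j, hj, rfl⟩ := Finset.mem_image.mp h3
          exact Or.inr ⟨j, Finset.mem_insert_of_mem hj, rfl⟩
    have hin : Fin.last n ∈ insert ((Fin.last n).succAbove k) (Fmap ends S).1 :=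
      Finset.mem_insert_of_mem (Finset.mem_insert_self _ _)
    have hup : ∀ j ∈ insert k S.1,
        (Fin.last n).succAbove j ∈ insert ((Fin.last n).succAbove k) (Fmap ends S).1 := by
      intro j hj
      rcases Finset.mem_insert.mp hj with rfl | hj2
      · exact Finset.mem_insert_self _ _
      · exact Finset.mem_insert_of_mem
          (Finset.mem_insert_of_mem (Finset.mem_image_of_mem _ hj2))
    have hbinj : Function.Injective
        (thC ends (insert ((Fin.last n).succAbove k) (Fmap ends S).1) (insert k S.1) hθbmem) :=
      (thC_bij ends _ _ hθbmem hin hup).1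
    have hcomm : ∀ x,
        thC ends (insert ((Fin.last n).succAbove k) (Fmap ends S).1) (insert k S.1) hθbmem
            (pmap (OGraph.mk V (n + 1) ends) (Fmap ends S) ((Fin.last n).succAbove k) x)
          = pmap (ctrG V ends (Fin.last n)) S k (thetaMap V ends S.1 x) :=
      fun x => Quot.inductionOn x fun _ => rfl
    have hiff := merge_transfer _ _ _ _ (theta_bij ends S.1) hbinj hcomm S.2
    have hfst : insert (Fin.last n) (Finset.image ((Fin.last n).succAbove) (insert k S.1))
        = insert ((Fin.last n).succAbove k) (Fmap ends S).1 := by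
      rw [show (Fmap ends S).1
          = insert (Fin.last n) (Finset.image ((Fin.last n).succAbove) S.1) from rfl]
      exact (congrArg (insert (Fin.last n)) (Finset.image_insert _ k S.1)).trans
        (Finset.insert_comm _ _ _)
    split_ifs with h1 h2 h2
    · exact map_zero _
    · exact absurd (hiff.mpr h1) h2
    · exact absurd (hiff.mp h2) h1
    · rw [alphaMap_single]
      exact congrArg (fun T => Finsupp.single T (1 : ℤ))
        (estate_ext hfst (fun v =>
          (color_transfer _ _ _ _ (theta_bij ends S.1) hbinj hcomm S.2 (Quot.mk _ v)).symm))

theorem beta_addEdge (S : (OGraph.mk V (n + 1) ends).EState) (he : Fin.last n ∉ S.1)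
    (k : Fin n) :
    betaMap V ends ((OGraph.mk V (n + 1) ends).addEdge S ((Fin.last n).succAbove k))
      = (delG V ends (Fin.last n)).addEdge (Bmap ends S) k := by
  by_cases hk : (Fin.last n).succAbove k ∈ S.1
  · have hkm : k ∈ S.1.preimage ((Fin.last n).succAbove)
        (Fin.succAbove_right_injective.injOn) := Finset.mem_preimage.mpr hk
    rw [addEdge_of_mem _ _ _ hk, map_zero, addEdge_of_mem (delG V ends (Fin.last n)) (Bmap ends S) k hkm]
  · have hk' : k ∉ (Bmap ends S).1 := fun h => hk (Finset.mem_preimage.mp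
      (show k ∈ S.1.preimage ((Fin.last n).succAbove)
        (Fin.succAbove_right_injective.injOn) from h))
    rw [addEdge_of_not_mem _ _ _ hk, addEdge_of_not_mem _ _ _ hk']
    have hup1 : ∀ j ∈ (Bmap ends S).1, (Fin.last n).succAbove j ∈ S.1 :=
      fun j hj => Finset.mem_preimage.mp
        (show j ∈ S.1.preimage ((Fin.last n).succAbove)
          (Fin.succAbove_right_injective.injOn) from hj)
    have hdown1 : ∀ f ∈ S.1, ∃ j ∈ (Bmap ends S).1, (Fin.last n).succAbove j = f := by
      intro f hf
      have hne : f ≠ Fin.last n := fun h => he (h ▸ hf)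
      obtain ⟨j, hj⟩ := Fin.exists_castSucc_eq.mpr hne
      have hjm : j ∈ S.1.preimage ((Fin.last n).succAbove)
          (Fin.succAbove_right_injective.injOn) :=
        Finset.mem_preimage.mpr (by rw [Fin.succAbove_last, hj]; exact hf)
      exact ⟨j, hjm, by rw [Fin.succAbove_last]; exact hj⟩
    have hup2 : ∀ j ∈ insert k (Bmap ends S).1,
        (Fin.last n).succAbove j ∈ insert ((Fin.last n).succAbove k) S.1 := by
      intro j hj
      rcases Finset.mem_insert.mp hj with rfl | hj2
      · exact Finset.mem_insert_self _ _
      · exact Finset.mem_insert_of_mem (hup1 j hj2)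
    have hdown2 : ∀ f ∈ insert ((Fin.last n).succAbove k) S.1,
        ∃ j ∈ insert k (Bmap ends S).1, (Fin.last n).succAbove j = f := by
      intro f hf
      rcases Finset.mem_insert.mp hf with rfl | hf2
      · exact ⟨k, Finset.mem_insert_self _ _, rfl⟩
      · obtain ⟨j, hj1, hj2⟩ := hdown1 f hf2
        exact ⟨j, Finset.mem_insert_of_mem hj1, hj2⟩
    have ha := upC_bij ends S.1 (Bmap ends S).1 hdown1 hup1
    have hbinj : Function.Injective
        (upC ends (insert ((Fin.last n).succAbove k) S.1) (insert k (Bmap ends S).1) hup2) :=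
      (upC_bij ends _ _ hdown2 hup2).1
    have hcomm : ∀ x,
        upC ends (insert ((Fin.last n).succAbove k) S.1) (insert k (Bmap ends S).1) hup2
            (pmap (delG V ends (Fin.last n)) (Bmap ends S) k x)
          = pmap (OGraph.mk V (n + 1) ends) S ((Fin.last n).succAbove k)
              (upC ends S.1 (Bmap ends S).1 hup1 x) :=
      fun x => Quot.inductionOn x fun _ => rfl
    have hiff := merge_transfer _ _ _ _ ha hbinj hcomm S.2
    have hlast : Fin.last n ∉ insert ((Fin.last n).succAbove k) S.1 := by
      intro h
      rcases Finset.mem_insert.mp h with h | h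
      · exact Fin.succAbove_ne _ k h.symm
      · exact he h
    have hfst : (insert ((Fin.last n).succAbove k) S.1).preimage ((Fin.last n).succAbove)
          (Fin.succAbove_right_injective.injOn) = insert k (Bmap ends S).1 := by
      rw [show (Bmap ends S).1 = S.1.preimage ((Fin.last n).succAbove)
          (Fin.succAbove_right_injective.injOn) from rfl]
      ext j
      simp [Finset.mem_preimage, Finset.mem_insert,
        (Fin.succAbove_right_injective (p := Fin.last n)).eq_iff]
      exact (Finset.mem_insert.trans (or_congr Iff.rfl Finset.mem_preimage)).symm
    split_ifs with h1 h2 h2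
    · exact map_zero _
    · exact absurd (hiff.mpr h1) h2
    · exact absurd (hiff.mp h2) h1
    · rw [betaMap_single, one_smul, betaState_eq, if_neg hlast]
      exact congrArg (fun T => Finsupp.single T (1 : ℤ))
        (estate_ext hfst (fun v =>
          (color_transfer _ _ _ _ ha hbinj hcomm S.2 (Quot.mk _ v)).symm))

theorem betaMap_addEdge_last (S : (OGraph.mk V (n + 1) ends).EState) :
    betaMap V ends ((OGraph.mk V (n + 1) ends).addEdge S (Fin.last n)) = 0 := by
  by_cases h : Fin.last n ∈ S.1
  · rw [addEdge_of_mem _ _ _ h, map_zero]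
  · rw [addEdge_of_not_mem _ _ _ h]
    split_ifs with h1
    · exact map_zero _
    · rw [betaMap_single, betaState_eq, if_pos (Finset.mem_insert_self _ _), smul_zero]

theorem betaMap_addEdge_of_last_mem (S : (OGraph.mk V (n + 1) ends).EState)
    (he : Fin.last n ∈ S.1) (f : Fin (n + 1)) :
    betaMap V ends ((OGraph.mk V (n + 1) ends).addEdge S f) = 0 := by
  by_cases h : f ∈ S.1
  · rw [addEdge_of_mem _ _ _ h, map_zero]
  · rw [addEdge_of_not_mem _ _ _ h]
    split_ifs with h1
    · exact map_zero _
    · rw [betaMap_single, betaState_eq, if_pos (Finset.mem_insert_of_mem he), smul_zero]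

/-! ### The differential -/

theorem dState_eq (G : OGraph) (S : G.EState) :
    G.dState S = ∑ f : Fin G.n,
      ((-1 : ℤ) ^ (S.1.filter fun g => g < f).card) • G.addEdge S f := rfl

theorem dState_big (S : (OGraph.mk V (n + 1) ends).EState) :
    (OGraph.mk V (n + 1) ends).dState S
      = (∑ k : Fin n, ((-1 : ℤ) ^ (S.1.filter fun g => g < (Fin.last n).succAbove k).card) •
          (OGraph.mk V (n + 1) ends).addEdge S ((Fin.last n).succAbove k))
        + ((-1 : ℤ) ^ (S.1.filter fun g => g < Fin.last n).card) •
          (OGraph.mk V (n + 1) ends).addEdge S (Fin.last n) := by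
  rw [dState_eq]
  rw [show (∑ f : Fin ((OGraph.mk V (n + 1) ends).n),
        ((-1 : ℤ) ^ (S.1.filter fun g => g < f).card) • (OGraph.mk V (n + 1) ends).addEdge S f)
      = ∑ f : Fin (n + 1),
        ((-1 : ℤ) ^ (S.1.filter fun g => g < f).card) • (OGraph.mk V (n + 1) ends).addEdge S f
      from rfl]
  rw [Fin.sum_univ_castSucc]
  simp only [Fin.succAbove_last]

theorem alpha_dState (S : (ctrG V ends (Fin.last n)).EState) :
    alphaMap V ends ((ctrG V ends (Fin.last n)).dState S)
      = (OGraph.mk V (n + 1) ends).dState (Fmap ends S) := by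
  rw [dState_big ends (Fmap ends S),
    addEdge_of_mem _ _ _ (Finset.mem_insert_self _ _), smul_zero, add_zero,
    dState_eq, map_sum]
  refine Finset.sum_congr rfl fun k _ => ?_
  rw [map_smul, alpha_addEdge ends S k]
  congr 2
  exact (sign_alpha (n := n) S.1 k).symm

theorem beta_dState (S : (OGraph.mk V (n + 1) ends).EState) (he : Fin.last n ∉ S.1) :
    betaMap V ends ((OGraph.mk V (n + 1) ends).dState S)
      = (delG V ends (Fin.last n)).dState (Bmap ends S) := by
  rw [dState_big, map_add, map_smul, betaMap_addEdge_last, smul_zero, add_zero, map_sum,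
    dState_eq]
  refine Finset.sum_congr rfl fun k _ => ?_
  rw [map_smul, beta_addEdge ends S he k]
  congr 2
  exact sign_beta S.1 he k

theorem beta_dState_mem (S : (OGraph.mk V (n + 1) ends).EState) (he : Fin.last n ∈ S.1) :
    betaMap V ends ((OGraph.mk V (n + 1) ends).dState S) = 0 := by
  rw [dState_eq, map_sum]
  refine Finset.sum_eq_zero fun f _ => ?_
  rw [map_smul, betaMap_addEdge_of_last_mem ends S he f, smul_zero]

/-! ### The chain map properties -/

theorem alpha_chain :
    (OGraph.mk V (n + 1) ends).diff.comp (alphaMap V ends)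
      = (alphaMap V ends).comp (ctrG V ends (Fin.last n)).diff := by
  apply Finsupp.lhom_ext
  intro S b
  simp only [LinearMap.comp_apply]
  rw [alphaMap_single, diff_single, diff_single, map_smul, alpha_dState]

theorem beta_chain :
    (betaMap V ends).comp (OGraph.mk V (n + 1) ends).diff
      = (delG V ends (Fin.last n)).diff.comp (betaMap V ends) := by
  apply Finsupp.lhom_ext
  intro S b
  simp only [LinearMap.comp_apply]
  rw [diff_single, map_smul, betaMap_single]
  by_cases he : Fin.last n ∈ S.1
  · rw [beta_dState_mem ends S he, smul_zero, betaState_eq, if_pos he, smul_zero, map_zero]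
  · rw [beta_dState ends S he, betaState_eq, if_neg he, map_smul, diff_single, one_smul]

/-! ### Cardinality and degree bookkeeping -/

theorem card_Fmap (S : (ctrG V ends (Fin.last n)).EState) :
    (Fmap ends S).1.card = S.1.card + 1 := by
  rw [show (Fmap ends S).1
      = insert (Fin.last n) (S.1.image ((Fin.last n).succAbove)) from rfl,
    Finset.card_insert_of_notMem (last_not_mem_image (n := n) S.1)]
  exact congrArg (· + 1)
    (Finset.card_image_of_injective S.1 (Fin.succAbove_right_injective (p := Fin.last n)))

theorem jdeg_Fmap (S : (ctrG V ends (Fin.last n)).EState) :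
    (OGraph.mk V (n + 1) ends).jdeg (Fmap ends S) = (ctrG V ends (Fin.last n)).jdeg S :=
  Nat.card_congr (Equiv.subtypeEquiv (Equiv.ofBijective _ (theta_bij ends S.1)) fun _ => Iff.rfl)

theorem card_Bmap (S : (OGraph.mk V (n + 1) ends).EState) (he : Fin.last n ∉ S.1) :
    (Bmap ends S).1.card = S.1.card := by
  conv_rhs => rw [← image_preimage_succAbove S.1 he]
  rw [Finset.card_image_of_injective _ (Fin.succAbove_right_injective (p := Fin.last n))]
  rfl

theorem bmap_up (S : (OGraph.mk V (n + 1) ends).EState) :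
    ∀ j ∈ (Bmap ends S).1, (Fin.last n).succAbove j ∈ S.1 :=
  fun j hj => Finset.mem_preimage.mp
    (show j ∈ S.1.preimage ((Fin.last n).succAbove)
      (Fin.succAbove_right_injective.injOn) from hj)

theorem bmap_down (S : (OGraph.mk V (n + 1) ends).EState) (he : Fin.last n ∉ S.1) :
    ∀ f ∈ S.1, ∃ j ∈ (Bmap ends S).1, (Fin.last n).succAbove j = f := by
  intro f hf
  have hne : f ≠ Fin.last n := fun h => he (h ▸ hf)
  obtain ⟨j, hj⟩ := Fin.exists_castSucc_eq.mpr hne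
  have hjm : j ∈ S.1.preimage ((Fin.last n).succAbove)
      (Fin.succAbove_right_injective.injOn) :=
    Finset.mem_preimage.mpr (by rw [Fin.succAbove_last, hj]; exact hf)
  exact ⟨j, hjm, by rw [Fin.succAbove_last]; exact hj⟩

theorem jdeg_Bmap (S : (OGraph.mk V (n + 1) ends).EState) (he : Fin.last n ∉ S.1) :
    (delG V ends (Fin.last n)).jdeg (Bmap ends S) = (OGraph.mk V (n + 1) ends).jdeg S :=
  Nat.card_congr (Equiv.subtypeEquiv
    (Equiv.ofBijective _ (upC_bij ends S.1 (Bmap ends S).1 (bmap_down ends S he) (bmap_up ends S)))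
    fun _ => Iff.rfl)

theorem card_Gmap (T : (delG V ends (Fin.last n)).EState) :
    (Gmap ends T).1.card = T.1.card :=
  Finset.card_image_of_injective T.1 (Fin.succAbove_right_injective (p := Fin.last n))

theorem jdeg_Gmap (T : (delG V ends (Fin.last n)).EState) :
    (OGraph.mk V (n + 1) ends).jdeg (Gmap ends T) = (delG V ends (Fin.last n)).jdeg T :=
  Nat.card_congr (Equiv.subtypeEquiv
    (Equiv.ofBijective _ (downC_bij ends _ T.1
      (fun f hf => (Finset.mem_image.mp hf).elim fun k hk => ⟨k, hk.1, hk.2⟩)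
      (fun k hk => Finset.mem_image_of_mem _ hk)))
    fun _ => Iff.rfl)

theorem betaState_Gmap (T : (delG V ends (Fin.last n)).EState) :
    betaState V ends (Gmap ends T) = Finsupp.single T 1 := by
  rw [betaState_eq,
    if_neg (show Fin.last n ∉ (Gmap ends T).1 from last_not_mem_image (n := n) T.1),
    Bmap_Gmap]

/-! ### A section of `betaMap` -/

noncomputable def gammaMap :
    ((delG V ends (Fin.last n)).EState →₀ ℤ) →ₗ[ℤ] ((OGraph.mk V (n + 1) ends).EState →₀ ℤ) :=
  Finsupp.lsum ℤ fun T => LinearMap.toSpanSingleton ℤ _ (Finsupp.single (Gmap ends T) (1 : ℤ))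

theorem gammaMap_single (T : (delG V ends (Fin.last n)).EState) (a : ℤ) :
    gammaMap ends (Finsupp.single T a) = Finsupp.single (Gmap ends T) a := by
  rw [gammaMap, Finsupp.lsum_single, LinearMap.toSpanSingleton_apply, Finsupp.smul_single,
    smul_eq_mul, mul_one]

theorem beta_gamma (z : (delG V ends (Fin.last n)).EState →₀ ℤ) :
    betaMap V ends (gammaMap ends z) = z := by
  induction z using Finsupp.induction with
  | zero => simp
  | single_add T a f _ _ ih =>
    rw [map_add, map_add, ih, gammaMap_single, betaMap_single, betaState_Gmap,
      Finsupp.smul_single, smul_eq_mul, mul_one]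

/-! ### Evaluation of `betaMap` -/

theorem betaMap_apply_Bmap (y : (OGraph.mk V (n + 1) ends).EState →₀ ℤ)
    (T : (OGraph.mk V (n + 1) ends).EState) (he : Fin.last n ∉ T.1) :
    (betaMap V ends y) (Bmap ends T) = y T := by
  classical
  induction y using Finsupp.induction with
  | zero => simp
  | single_add S a f hS haz ih =>
    rw [map_add, Finsupp.add_apply, Finsupp.add_apply, ih, betaMap_single]
    congr 1
    by_cases h1 : Fin.last n ∈ S.1
    · rw [betaState_eq, if_pos h1, smul_zero, Finsupp.zero_apply, Finsupp.single_apply,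
        if_neg (show ¬S = T from fun hST => he (by rw [← hST]; exact h1))]
    · rw [betaState_eq, if_neg h1, Finsupp.smul_single, smul_eq_mul, mul_one,
        Finsupp.single_apply, Finsupp.single_apply]
      refine if_congr ⟨fun h => ?_, fun h => by rw [h]⟩ rfl rfl
      rw [← Gmap_Bmap ends S h1, ← Gmap_Bmap ends T he, h]

/-! ### Range of `Fmap` -/

theorem Fmap_range (T : (OGraph.mk V (n + 1) ends).EState) (he : Fin.last n ∈ T.1) :
    ∃ S, Fmap ends S = T := by
  obtain ⟨t, c⟩ := T
  have he' : Fin.last n ∈ t := he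
  have hnot : Fin.last n ∉ t.erase (Fin.last n) := Finset.notMem_erase _ _
  have h1 : insert (Fin.last n)
      (((t.erase (Fin.last n)).preimage ((Fin.last n).succAbove)
        (Fin.succAbove_right_injective.injOn)).image ((Fin.last n).succAbove)) = t := by
    rw [image_preimage_succAbove _ hnot, Finset.insert_erase he']
  refine ⟨⟨(t.erase (Fin.last n)).preimage ((Fin.last n).succAbove)
      (Fin.succAbove_right_injective.injOn),
    fun K => c (cast (congrArg (OGraph.mk V (n + 1) ends).Comp h1)
      (psC ends _ _ (Finset.mem_insert_self _ _) (hbig2 _) K))⟩, ?_⟩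
  refine estate_ext h1 fun v => ?_
  show c (cast (congrArg (OGraph.mk V (n + 1) ends).Comp h1) (Quot.mk _ v))
    ↔ c (Quot.mk _ v)
  rw [cast_quotmk h1 v]

end Aux

end OGraph

open OGraph in
/-- for a graph `G` with the edge `e` ordered last, the maps
`α : C^{i−1,j}(G/e) → C^{i,j}(G)` (adding the edge `e`) and
`β : C^{i,j}(G) → C^{i,j}(G−e)` (projection killing the states containing `e`)
are chain maps fitting into a short exact sequence
`0 → C^{i−1,j}(G/e) → C^{i,j}(G) → C^{i,j}(G−e) → 0`. -/
theorem deletion_contraction_ses (V : Type) [Fintype V] {n : ℕ}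
    (ends : Fin (n + 1) → Sym2 V) :
    ((OGraph.mk V (n + 1) ends).diff.comp (alphaMap V ends) =
        (alphaMap V ends).comp (ctrG V ends (Fin.last n)).diff) ∧
    ((betaMap V ends).comp (OGraph.mk V (n + 1) ends).diff =
        (delG V ends (Fin.last n)).diff.comp (betaMap V ends)) ∧
    (∀ i j : ℕ, ∀ x ∈ (ctrG V ends (Fin.last n)).Cmod i j,
        alphaMap V ends x ∈ (OGraph.mk V (n + 1) ends).Cmod (i + 1) j) ∧
    (∀ i j : ℕ, ∀ x ∈ (OGraph.mk V (n + 1) ends).Cmod i j,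
        betaMap V ends x ∈ (delG V ends (Fin.last n)).Cmod i j) ∧
    Function.Injective (alphaMap V ends) ∧
    Function.Exact (alphaMap V ends) (betaMap V ends) ∧
    Function.Surjective (betaMap V ends) ∧
    (∀ i j : ℕ, ∀ z ∈ (delG V ends (Fin.last n)).Cmod i j,
        ∃ y ∈ (OGraph.mk V (n + 1) ends).Cmod i j, betaMap V ends y = z) := by
    classical
  refine ⟨alpha_chain ends, beta_chain ends, ?_, ?_, ?_, ?_, ?_, ?_⟩
  · -- α respects bidegrees
    intro i j x hx
    have hle : Finsupp.supported ℤ ℤ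
        {S : (ctrG V ends (Fin.last n)).EState |
          S.1.card = i ∧ (ctrG V ends (Fin.last n)).jdeg S = j}
        ≤ Submodule.comap (alphaMap V ends) ((OGraph.mk V (n + 1) ends).Cmod (i + 1) j) := by
      rw [Finsupp.supported_eq_span_single, Submodule.span_le]
      rintro w ⟨S, hS, rfl⟩
      simp only [SetLike.mem_coe, Submodule.mem_comap]
      rw [alphaMap_single]
      exact Finsupp.single_mem_supported ℤ 1
        ⟨by rw [card_Fmap, hS.1], by rw [jdeg_Fmap]; exact hS.2⟩
    exact hle hx
  · -- β respects bidegrees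
    intro i j x hx
    have hle : Finsupp.supported ℤ ℤ
        {S : (OGraph.mk V (n + 1) ends).EState |
          S.1.card = i ∧ (OGraph.mk V (n + 1) ends).jdeg S = j}
        ≤ Submodule.comap (betaMap V ends) ((delG V ends (Fin.last n)).Cmod i j) := by
      rw [Finsupp.supported_eq_span_single, Submodule.span_le]
      rintro w ⟨S, hS, rfl⟩
      simp only [SetLike.mem_coe, Submodule.mem_comap]
      rw [betaMap_single, one_smul]
      by_cases he : Fin.last n ∈ S.1
      · rw [betaState_eq, if_pos he]
        exact Submodule.zero_mem _
      · rw [betaState_eq, if_neg he]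
        exact Finsupp.single_mem_supported ℤ 1
          ⟨by rw [card_Bmap ends S he]; exact hS.1, by rw [jdeg_Bmap ends S he]; exact hS.2⟩
    exact hle hx
  · -- α injective
    intro a b hab
    apply Finsupp.mapDomain_injective (Fmap_inj ends)
    rw [← alphaMap_eq_mapDomain, ← alphaMap_eq_mapDomain]
    exact hab
  · -- exactness
    refine fun y => ⟨fun hy => ?_, ?_⟩
    · have hsupp : ↑y.support ⊆ Set.range (Fmap ends) := by
        intro T hT
        by_cases he : Fin.last n ∈ T.1
        · obtain ⟨S, hS⟩ := Fmap_range ends T he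
          exact ⟨S, hS⟩
        · exfalso
          have h1 := betaMap_apply_Bmap ends y T he
          rw [hy, Finsupp.zero_apply] at h1
          exact Finsupp.mem_support_iff.mp hT h1.symm
      exact ⟨Finsupp.comapDomain _ y (Fmap_inj ends).injOn, by
        rw [alphaMap_eq_mapDomain]
        exact Finsupp.mapDomain_comapDomain _ (Fmap_inj ends) y hsupp⟩
    · rintro ⟨x, rfl⟩
      induction x using Finsupp.induction with
      | zero => simp
      | single_add S a f _ _ ih =>
        rw [map_add, map_add, ih, add_zero, alphaMap_single, betaMap_single, betaState_eq,
          if_pos (show Fin.last n ∈ (Fmap ends S).1 from Finset.mem_insert_self _ _),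
          smul_zero]
  · -- β surjective
    exact fun z => ⟨gammaMap ends z, beta_gamma ends z⟩
  · -- β surjective at the level of bidegrees
    intro i j z hz
    refine ⟨gammaMap ends z, ?_, beta_gamma ends z⟩
    have hle : Finsupp.supported ℤ ℤ
        {T : (delG V ends (Fin.last n)).EState |
          T.1.card = i ∧ (delG V ends (Fin.last n)).jdeg T = j}
        ≤ Submodule.comap (gammaMap ends) ((OGraph.mk V (n + 1) ends).Cmod i j) := by
      rw [Finsupp.supported_eq_span_single, Submodule.span_le]
      rintro w ⟨T, hT, rfl⟩
      simp only [SetLike.mem_coe, Submodule.mem_comap]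
      rw [gammaMap_single]
      exact Finsupp.single_mem_supported ℤ 1
        ⟨by rw [card_Gmap]; exact hT.1, by rw [jdeg_Gmap]; exact hT.2⟩
    exact hle hz
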